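/- arXiv:2112.15414 — 3 statements merged into one kernel-verified Lean document; each statement's English description precedes it below -/
import Mathlib

section
/- Let γ ∈ (0,1) and a ≤ 0, and define g(k) = 1/γ − (1/γ²)·|k|·coth(|k|) − (a/γ)·k² + (k²/γ³)·coth²(|k|) for real k ≠ 0. Then there exist positive constants d₁′, d₂′, d₁, d₂ such that for every real k ≠ 0, d₁′ + d₂′·k² ≤ g(k) ≤ d₁ + d₂·k². -/
/-- The hyperbolic cotangent. -/
noncomputable def coth (y : ℝ) : ℝ := Real.cosh y / Real.sinh y

/-- The coefficient function `g` of the linearized Boussinesq/Full dispersion system. -/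
noncomputable def g (γ a k : ℝ) : ℝ :=
  1 / γ - (1 / γ ^ 2) * (|k| * coth |k|) - (a / γ) * k ^ 2 + (k ^ 2 / γ ^ 3) * (coth |k|) ^ 2

/-- For `γ ∈ (0,1)` and `a ≤ 0`, `g` is bounded above and below by quadratics with
positive coefficients: `d₁' + d₂' k² ≤ g(k) ≤ d₁ + d₂ k²` for all `k ≠ 0`. -/
theorem g_quadratic_bounds (γ a : ℝ) (hγ : γ ∈ Set.Ioo (0 : ℝ) 1) (ha : a ≤ 0) :
    ∃ d₁' > 0, ∃ d₂' > 0, ∃ d₁ > 0, ∃ d₂ > 0, ∀ k : ℝ, k ≠ 0 →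
      d₁' + d₂' * k ^ 2 ≤ g γ a k ∧ g γ a k ≤ d₁ + d₂ * k ^ 2 := by
  obtain ⟨hγ0, hγ1⟩ := hγ
  have hγ3 : (0:ℝ) < γ ^ 3 := by positivity
  have hd2 : (0:ℝ) < 2 / γ ^ 3 - a / γ := by
    have h1 : a / γ ≤ 0 := div_nonpos_of_nonpos_of_nonneg ha hγ0.le
    have h2 : (0:ℝ) < 2 / γ ^ 3 := by positivity
    linarith
  refine ⟨1/(2*γ), by positivity, 1/(2*γ^3), by positivity,
    1/γ + 2/γ^3, by positivity, 2/γ^3 - a/γ, hd2, ?_⟩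
  intro k hk
  have hx : 0 < |k| := abs_pos.mpr hk
  have hk2 : k ^ 2 = |k| ^ 2 := (sq_abs k).symm
  simp only [g]
  set x := |k| with hxdef
  set c := coth x with hcdef
  have hs : 0 < Real.sinh x := Real.sinh_pos_iff.2 hx
  have hcs : Real.sinh x ≤ Real.cosh x := by
    nlinarith [Real.cosh_sub_sinh x, Real.exp_pos (-x)]
  have hc1 : 1 ≤ c := (one_le_div hs).2 hcs
  have ht : x ≤ x * c := le_mul_of_one_le_right hx.le hc1
  have hc2 : x * c ≤ x + 1 := by
    rw [hcdef, coth, mul_div_assoc', div_le_iff₀ hs]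
    have h := Real.add_one_le_exp (2*x)
    have hce : Real.cosh x = (Real.exp x + Real.exp (-x))/2 := Real.cosh_eq x
    have hse : Real.sinh x = (Real.exp x - Real.exp (-x))/2 := Real.sinh_eq x
    have he : Real.exp (2*x) * Real.exp (-x) = Real.exp x := by
      rw [← Real.exp_add]; ring_nf
    nlinarith [Real.exp_pos (-x), Real.exp_pos x]
  have hna : 0 ≤ (-a) * γ^2 * x^2 := mul_nonneg (mul_nonneg (neg_nonneg.2 ha) (sq_nonneg γ)) (sq_nonneg x)
  constructor
  · have hL : 1/(2*γ) + 1/(2*γ^3) * k ^ 2 = (γ^2/2 + x^2/2) / γ^3 := by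
      rw [hk2]; field_simp
    have hR : 1 / γ - (1 / γ ^ 2) * (x * c) - (a / γ) * k ^ 2 + (k ^ 2 / γ ^ 3) * c ^ 2
        = (γ^2 - γ*(x*c) + (x*c)^2 - a*γ^2*x^2) / γ^3 := by
      rw [hk2]; field_simp; ring
    rw [hL, hR]
    gcongr ?_ / _
    nlinarith [sq_nonneg (x*c - γ), ht, hx.le, hna]
  · have hL : (1/γ + 2/γ^3) + (2/γ^3 - a/γ) * k ^ 2
        = (γ^2 + 2 + (2 - a*γ^2)*x^2) / γ^3 := by
      rw [hk2]; field_simp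
    have hR : 1 / γ - (1 / γ ^ 2) * (x * c) - (a / γ) * k ^ 2 + (k ^ 2 / γ ^ 3) * c ^ 2
        = (γ^2 - γ*(x*c) + (x*c)^2 - a*γ^2*x^2) / γ^3 := by
      rw [hk2]; field_simp; ring
    rw [hL, hR]
    gcongr ?_ / _
    nlinarith [hc2, ht, hx, sq_nonneg (x - 1), mul_pos hγ0 (lt_of_lt_of_le hx ht)]
end

section
/- Let γ ∈ (0,1), b > 0, d > 0, a ≤ 0, c < 0, and define g(k) = 1/γ − (1/γ²)·|k|·coth(|k|) − (a/γ)·k² + (k²/γ³)·coth²(|k|) for real k ≠ 0, and α(k) = sqrt( g(k)·(1 + d k²) / ( (1 − γ)·(1 + b k²)·(1 − c k²) ) ). Then there exist positive constants C₁, C₂ such that C₁ ≤ α(k) ≤ C₂ for all real k ≠ 0; that is, α is an elliptic symbol of order 0. -/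
/-- The eigenvector ratio `α(k)` in the 'generic' case `b, d > 0`, `a ≤ 0`, `c < 0`. -/
noncomputable def alphaSym (γ a b c d k : ℝ) : ℝ :=
  Real.sqrt (g γ a k * (1 + d * k ^ 2) / ((1 - γ) * (1 + b * k ^ 2) * (1 - c * k ^ 2)))

lemma sinh_le_mul_cosh {t : ℝ} (ht : 0 < t) : Real.sinh t ≤ t * Real.cosh t := by
  obtain ⟨ξ, hξ, hslope⟩ := exists_hasDerivAt_eq_slope Real.sinh Real.cosh ht
    (Real.continuous_sinh.continuousOn) (fun x _ => Real.hasDerivAt_sinh x)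
  have hξle : Real.cosh ξ ≤ Real.cosh t := by
    rw [Real.cosh_le_cosh, abs_of_pos hξ.1, abs_of_pos ht]
    exact hξ.2.le
  have h : (Real.sinh t - Real.sinh 0) / (t - 0) ≤ Real.cosh t := hslope ▸ hξle
  rw [Real.sinh_zero, sub_zero, sub_zero, div_le_iff₀ ht] at h
  linarith

lemma mul_coth_le {t : ℝ} (ht : 0 < t) : t * coth t ≤ 1 + t := by
  have hs : 0 < Real.sinh t := Real.sinh_pos_iff.2 ht
  have h1 : t ≤ Real.sinh t := Real.self_le_sinh_iff.2 ht.le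
  have h2 : Real.cosh t - Real.sinh t = Real.exp (-t) := Real.cosh_sub_sinh t
  have h3 : Real.exp (-t) ≤ 1 := Real.exp_le_one_iff.2 (by linarith)
  have h4 : t * Real.cosh t ≤ (1 + t) * Real.sinh t := by nlinarith
  rw [coth, mul_div_assoc', div_le_iff₀ hs]
  linarith

lemma one_le_mul_coth {t : ℝ} (ht : 0 < t) : 1 ≤ t * coth t := by
  have hs : 0 < Real.sinh t := Real.sinh_pos_iff.2 ht
  rw [coth, mul_div_assoc', le_div_iff₀ hs, one_mul]
  exact sinh_le_mul_cosh ht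

lemma le_coth {t : ℝ} (ht : 0 < t) : 1 ≤ coth t := by
  have hs : 0 < Real.sinh t := Real.sinh_pos_iff.2 ht
  rw [coth, le_div_iff₀ hs, one_mul]
  nlinarith [Real.cosh_sub_sinh t, Real.exp_pos (-t)]

/-- Bounds for the inner quotient, in abstracted polynomial form. -/
lemma ratio_bounds (γ a b d e s x : ℝ) (hγ0 : 0 < γ) (hγ1 : γ < 1) (hb : 0 < b)
    (hd : 0 < d) (he0 : 0 < e) (ha : a ≤ 0) (hs0 : 0 < s) (hx1 : 1 ≤ x)
    (hx2 : x ^ 2 ≤ 2 + 2 * s) (hsx : s ≤ x ^ 2) :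
    min (1 - γ) (γ ^ 2) / γ ^ 3 * d / ((b + d) * (1 + e) * (1 - γ)) ≤
      (x ^ 2 - γ * x + γ ^ 2 + (-a) * γ ^ 2 * s) / γ ^ 3 * (1 + d * s) /
        ((1 - γ) * (1 + b * s) * (1 + e * s)) ∧
    (x ^ 2 - γ * x + γ ^ 2 + (-a) * γ ^ 2 * s) / γ ^ 3 * (1 + d * s) /
        ((1 - γ) * (1 + b * s) * (1 + e * s)) ≤
      (3 - a * γ ^ 2) / γ ^ 3 * (b + d) * (1 + e) / (b * e * (1 - γ)) := by
  have h1γ : 0 < 1 - γ := by linarith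
  have hγ3 : 0 < γ ^ 3 := by positivity
  have hx0 : 0 ≤ x := by linarith
  set G : ℝ := (x ^ 2 - γ * x + γ ^ 2 + (-a) * γ ^ 2 * s) / γ ^ 3 with hG
  set m : ℝ := min (1 - γ) (γ ^ 2) / γ ^ 3 with hm
  set M : ℝ := (3 - a * γ ^ 2) / γ ^ 3 with hM
  have hmin0 : 0 < min (1 - γ) (γ ^ 2) := lt_min (by linarith) (by positivity)
  have hm0 : 0 < m := div_pos hmin0 hγ3
  have hM0 : 0 < M := div_pos (by nlinarith) hγ3
  have hmle1 : min (1 - γ) (γ ^ 2) ≤ 1 - γ := min_le_left _ _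
  have hmle2 : min (1 - γ) (γ ^ 2) ≤ γ ^ 2 := min_le_right _ _
  have hna : 0 ≤ (-a) * γ ^ 2 * s :=
    mul_nonneg (mul_nonneg (neg_nonneg.2 ha) (sq_nonneg γ)) hs0.le
  have hgx : γ * x ≤ γ * x ^ 2 := by
    nlinarith [mul_nonneg (mul_nonneg hγ0.le hx0) (by linarith : (0:ℝ) ≤ x - 1)]
  have hcore1 : min (1 - γ) (γ ^ 2) * (1 + s) ≤
      x ^ 2 - γ * x + γ ^ 2 + (-a) * γ ^ 2 * s := by
    have e1 : min (1 - γ) (γ ^ 2) * s ≤ (1 - γ) * s :=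
      mul_le_mul_of_nonneg_right hmle1 hs0.le
    have e2 : (1 - γ) * s ≤ (1 - γ) * x ^ 2 := mul_le_mul_of_nonneg_left hsx h1γ.le
    nlinarith
  have hcore2 : x ^ 2 - γ * x + γ ^ 2 + (-a) * γ ^ 2 * s ≤
      (3 - a * γ ^ 2) * (1 + s) := by
    have h3 : γ ^ 2 ≤ 1 := by nlinarith
    have h4 : 0 ≤ γ * x := mul_nonneg hγ0.le hx0
    have h5 : 0 ≤ (-a) * γ ^ 2 := mul_nonneg (neg_nonneg.2 ha) (sq_nonneg γ)
    nlinarith [mul_nonneg h5 hs0.le]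
  have hglow : m * (1 + s) ≤ G := by
    rw [hG, hm, div_mul_eq_mul_div, div_le_div_iff₀ hγ3 hγ3]
    exact mul_le_mul_of_nonneg_right hcore1 hγ3.le
  have hghigh : G ≤ M * (1 + s) := by
    rw [hG, hM, div_mul_eq_mul_div, div_le_div_iff₀ hγ3 hγ3]
    exact mul_le_mul_of_nonneg_right hcore2 hγ3.le
  have hbt : 0 < 1 + b * s := by positivity
  have het : 0 < 1 + e * s := by positivity
  have hdt : 0 < 1 + d * s := by positivity
  have hQ0 : 0 < (1 - γ) * (1 + b * s) * (1 + e * s) := by positivity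
  have hkey1 : d * ((1 + b * s) * (1 + e * s)) ≤
      (b + d) * (1 + e) * ((1 + s) * (1 + d * s)) := by
    linarith [hb.le, mul_nonneg hb.le he0.le, mul_nonneg hd.le he0.le,
      mul_nonneg hb.le hs0.le, mul_nonneg (mul_nonneg hb.le he0.le) hs0.le,
      mul_nonneg hd.le hs0.le,
      mul_nonneg (mul_nonneg (mul_nonneg hb.le hd.le) he0.le) hs0.le,
      mul_nonneg (mul_nonneg hd.le hd.le) hs0.le,
      mul_nonneg (mul_nonneg (mul_nonneg hd.le hd.le) he0.le) hs0.le,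
      mul_nonneg (mul_nonneg hb.le hd.le) (mul_nonneg hs0.le hs0.le),
      mul_nonneg (mul_nonneg hd.le hd.le) (mul_nonneg hs0.le hs0.le),
      mul_nonneg (mul_nonneg (mul_nonneg hd.le hd.le) he0.le) (mul_nonneg hs0.le hs0.le)]
  have hkey2 : b * e * ((1 + s) * (1 + d * s)) ≤
      (b + d) * (1 + e) * ((1 + b * s) * (1 + e * s)) := by
    linarith [hb.le, hd.le, mul_nonneg hd.le he0.le,
      mul_nonneg (mul_nonneg hb.le hb.le) hs0.le,
      mul_nonneg (mul_nonneg (mul_nonneg hb.le hb.le) he0.le) hs0.le,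
      mul_nonneg (mul_nonneg hb.le hd.le) hs0.le,
      mul_nonneg (mul_nonneg (mul_nonneg hb.le he0.le) he0.le) hs0.le,
      mul_nonneg (mul_nonneg hd.le he0.le) hs0.le,
      mul_nonneg (mul_nonneg (mul_nonneg hd.le he0.le) he0.le) hs0.le,
      mul_nonneg (mul_nonneg (mul_nonneg hb.le hb.le) he0.le) (mul_nonneg hs0.le hs0.le),
      mul_nonneg (mul_nonneg (mul_nonneg (mul_nonneg hb.le hb.le) he0.le) he0.le)
        (mul_nonneg hs0.le hs0.le),
      mul_nonneg (mul_nonneg (mul_nonneg (mul_nonneg hb.le hd.le) he0.le) he0.le)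
        (mul_nonneg hs0.le hs0.le)]
  constructor
  · rw [le_div_iff₀ hQ0]
    have h1 : m * (1 + s) * (1 + d * s) ≤ G * (1 + d * s) :=
      mul_le_mul_of_nonneg_right hglow hdt.le
    have hden : 0 < (b + d) * (1 + e) * (1 - γ) := by positivity
    rw [div_mul_eq_mul_div, div_le_iff₀ hden]
    calc m * d * ((1 - γ) * (1 + b * s) * (1 + e * s))
        ≤ m * ((b + d) * (1 + e) * ((1 + s) * (1 + d * s))) * (1 - γ) := by
          linarith [mul_le_mul_of_nonneg_right (mul_le_mul_of_nonneg_left hkey1 hm0.le) h1γ.le]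
      _ = m * (1 + s) * (1 + d * s) * ((b + d) * (1 + e) * (1 - γ)) := by ring
      _ ≤ G * (1 + d * s) * ((b + d) * (1 + e) * (1 - γ)) :=
          mul_le_mul_of_nonneg_right h1 hden.le
  · rw [div_le_iff₀ hQ0]
    have h1 : G * (1 + d * s) ≤ M * (1 + s) * (1 + d * s) :=
      mul_le_mul_of_nonneg_right hghigh hdt.le
    have hden : 0 < b * e * (1 - γ) := by positivity
    have hrw : M * (b + d) * (1 + e) / (b * e * (1 - γ)) *
        ((1 - γ) * (1 + b * s) * (1 + e * s)) =
        M * (b + d) * (1 + e) * ((1 - γ) * (1 + b * s) * (1 + e * s)) / (b * e * (1 - γ)) := by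
      ring
    rw [hrw, le_div_iff₀ hden]
    calc G * (1 + d * s) * (b * e * (1 - γ))
        ≤ M * (1 + s) * (1 + d * s) * (b * e * (1 - γ)) :=
          mul_le_mul_of_nonneg_right h1 hden.le
      _ = M * (b * e * ((1 + s) * (1 + d * s))) * (1 - γ) := by ring
      _ ≤ M * (b + d) * (1 + e) * ((1 - γ) * (1 + b * s) * (1 + e * s)) := by
          linarith [mul_le_mul_of_nonneg_right (mul_le_mul_of_nonneg_left hkey2 hM0.le) h1γ.le]

/-- In the 'generic' Boussinesq/Full dispersion case, the eigenvector ratio `α` is an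
elliptic symbol of order `0`: it is bounded above and below by positive constants. -/
theorem alpha_order_zero (γ a b c d : ℝ) (hγ : γ ∈ Set.Ioo (0 : ℝ) 1)
    (hb : 0 < b) (hd : 0 < d) (ha : a ≤ 0) (hc : c < 0) :
    ∃ C₁ > 0, ∃ C₂ > 0, ∀ k : ℝ, k ≠ 0 →
      C₁ ≤ alphaSym γ a b c d k ∧ alphaSym γ a b c d k ≤ C₂ := by
  obtain ⟨hγ0, hγ1⟩ := hγ
  have h1γ : 0 < 1 - γ := by linarith
  have he0 : 0 < -c := by linarith
  have hγ3 : 0 < γ ^ 3 := by positivity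
  have hmin0 : 0 < min (1 - γ) (γ ^ 2) := lt_min (by linarith) (by positivity)
  set L : ℝ := min (1 - γ) (γ ^ 2) / γ ^ 3 * d / ((b + d) * (1 + -c) * (1 - γ)) with hL
  set U : ℝ := (3 - a * γ ^ 2) / γ ^ 3 * (b + d) * (1 + -c) / (b * -c * (1 - γ)) with hU
  have hL0 : 0 < L := by
    apply div_pos (by positivity) (by positivity)
  have hU0 : 0 < U := by
    apply div_pos _ (by positivity)
    have : 0 < 3 - a * γ ^ 2 := by nlinarith
    positivity
  refine ⟨Real.sqrt L, Real.sqrt_pos.2 hL0, Real.sqrt U, Real.sqrt_pos.2 hU0, fun k hk => ?_⟩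
  have ht : 0 < |k| := abs_pos.2 hk
  have hk2 : k ^ 2 = |k| ^ 2 := (sq_abs k).symm
  have hx1 : 1 ≤ |k| * coth |k| := one_le_mul_coth ht
  have hx2 : |k| * coth |k| ≤ 1 + |k| := mul_coth_le ht
  have hxt : |k| ≤ |k| * coth |k| := by
    have hc1 := le_coth ht
    nlinarith
  have hs0 : 0 < |k| ^ 2 := by positivity
  have hx2' : (|k| * coth |k|) ^ 2 ≤ 2 + 2 * |k| ^ 2 := by nlinarith [sq_nonneg (1 - |k|)]
  have hsx : |k| ^ 2 ≤ (|k| * coth |k|) ^ 2 := by nlinarith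
  have hgeq : g γ a k = ((|k| * coth |k|) ^ 2 - γ * (|k| * coth |k|) + γ ^ 2
      + (-a) * γ ^ 2 * |k| ^ 2) / γ ^ 3 := by
    rw [g, hk2]
    field_simp
    ring
  have hQ : (1 - γ) * (1 + b * k ^ 2) * (1 - c * k ^ 2)
      = (1 - γ) * (1 + b * |k| ^ 2) * (1 + -c * |k| ^ 2) := by
    rw [hk2]; ring
  obtain ⟨hlow, hhigh⟩ := ratio_bounds γ a b d (-c) (|k| ^ 2) (|k| * coth |k|)
    hγ0 hγ1 hb hd he0 ha hs0 hx1 hx2' hsx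
  constructor
  · unfold alphaSym
    apply Real.sqrt_le_sqrt
    rw [hQ, hk2, hgeq]
    exact hlow
  · unfold alphaSym
    apply Real.sqrt_le_sqrt
    rw [hQ, hk2, hgeq]
    exact hhigh
end

section
/- Let N be an even positive integer, M = N/2, L > 0, ω_N = e^{−2πi/N}, and fix γ ∈ (0,1), ε > 0, μ > 0, μ₂ > 0, b > 0, c ≤ 0, with the Hamiltonian condition d = b. With D_N the Fourier pseudospectral differentiation matrix with entries (D_N)_{l j} = Re( (π/(N L)) Σ_{m=−M}^{M−1} ω_N^{m(j−l)} i·m ), L_{μ₂,h} the matrix with entries Re( (1/N) Σ_{m=−M}^{M−1} ω_N^{m(j−l)} l(πm/L) ) where l is the symbol of L_{μ₂}, J_{b,h} = I − μ b D_N², J_{c,h} = I + μ c D_N², and D the flip matrix (D U)_j = U_{N+1−j}: suppose Z, U : [0,∞) → ℝ^N are differentiable and satisfy, for all t ≥ 0, the semidiscrete system J_{b,h}·Z′(t) + L_{μ₂,h}·D_N·U(t) − (ε/γ)·D_N·(Z(t)∘U(t)) = 0 and J_{b,h}·U′(t) + (1 − γ)·J_{c,h}·D_N·Z(t) − (ε/(2γ))·D_N·(U(t)∘U(t))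 = 0, together with the symmetry D·Z(t) = Z(t) and D·U(t) = U(t) for all t ≥ 0. Then the discrete momentum I_h(Z(t), U(t)) = ⟨Z(t), J_{b,h}·U(t)⟩ is constant in time: I_h(Z(t), U(t)) = I_h(Z(0), U(0)) for all t ≥ 0. -/
/-- The Fourier symbol `l(k)` of the nonlocal operator `L_{μ₂}`, with the limit value at
`k = 0`. -/
noncomputable def lSym (γ a μ μ₂ k : ℝ) : ℝ :=
  if k = 0 then
    1 / γ - Real.sqrt μ / (γ ^ 2 * Real.sqrt μ₂) + μ / (γ ^ 3 * μ₂)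
  else
    1 / γ - (Real.sqrt μ / γ ^ 2) * (|k| * coth (Real.sqrt μ₂ * |k|))
      - (μ / γ) * (a - (1 / γ ^ 2) * (coth (Real.sqrt μ₂ * |k|)) ^ 2) * k ^ 2

/-- The Fourier pseudospectral differentiation matrix `D_N` on the uniform grid of `N`
collocation points of `(-L, L)`. -/
noncomputable def DNmat (N : ℕ) (L : ℝ) : Matrix (Fin N) (Fin N) ℝ :=
  fun l j =>
    (((Real.pi / (N * L) : ℝ) : ℂ) *
      ∑ m ∈ Finset.Icc (-((N : ℤ) / 2)) ((N : ℤ) / 2 - 1),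
        Complex.exp (-2 * Real.pi * Complex.I / N) ^ (m * ((j : ℤ) - (l : ℤ)))
          * (Complex.I * m)).re

/-- The pseudospectral discretization `L_{μ₂,h}` of the nonlocal operator `L_{μ₂}`. -/
noncomputable def Lmat (N : ℕ) (L γ a μ μ₂ : ℝ) : Matrix (Fin N) (Fin N) ℝ :=
  fun l j =>
    (((1 / N : ℝ) : ℂ) *
      ∑ m ∈ Finset.Icc (-((N : ℤ) / 2)) ((N : ℤ) / 2 - 1),
        Complex.exp (-2 * Real.pi * Complex.I / N) ^ (m * ((j : ℤ) - (l : ℤ)))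
          * ((lSym γ a μ μ₂ (Real.pi * m / L) : ℝ) : ℂ)).re

/-- The reflection (flip) matrix `D` on `ℝ^N`, `(D U)_j = U_{N+1-j}` (1-indexed). -/
def flipMat (N : ℕ) : Matrix (Fin N) (Fin N) ℝ :=
  fun l j => if (l : ℕ) + (j : ℕ) = N - 1 then 1 else 0

open Complex Matrix

section Reflection

variable {ι R : Type*} [Fintype ι] [CommRing R] (e : Equiv.Perm ι)

theorem dotProduct_eq_zero_of_comp_perm [IsAddTorsionFree R] {x y : ι → R}
    (hx : x ∘ e = x) (hy : y ∘ e = -y) : x ⬝ᵥ y = 0 := by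
  have h := comp_equiv_dotProduct_comp_equiv (x := x) (y := y) e
  rw [hx, hy, dotProduct_neg] at h
  exact self_eq_neg.mp h.symm

theorem mulVec_comp_perm {A : Matrix ι ι R} {s t : R} (hA : A.submatrix e e = s • A)
    {x : ι → R} (hx : x ∘ e = t • x) : (A *ᵥ x) ∘ e = (s * t) • (A *ᵥ x) := by
  have h := submatrix_mulVec_equiv A (x ∘ e) e e
  rw [Function.comp_assoc, e.self_comp_symm, Function.comp_id, hA, hx] at h
  rw [← h, smul_mulVec, mulVec_smul, smul_smul]

end Reflection

section Toeplitz

variable {R : Type*} [CommRing R] {n : ℕ} (g : ℤ → R) {s : R}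

theorem toeplitz_transpose (hg : ∀ k, g (-k) = s * g k) :
    (of fun l j : Fin n => g ((j : ℤ) - l))ᵀ = s • of fun l j : Fin n => g ((j : ℤ) - l) := by
  ext l j
  simp [← hg]

theorem toeplitz_submatrix_rev (hg : ∀ k, g (-k) = s * g k) :
    (of fun l j : Fin n => g ((j : ℤ) - l)).submatrix Fin.rev Fin.rev
      = s • of fun l j : Fin n => g ((j : ℤ) - l) := by
  ext l j
  rw [submatrix_apply, of_apply, Matrix.smul_apply, of_apply, smul_eq_mul, ← hg]
  congr 1
  simp only [Fin.val_rev]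
  omega

end Toeplitz

section FourierCollocation

noncomputable def fourierKernel (N : ℕ) (r : ℝ) (h : ℤ → ℂ) (k : ℤ) : ℝ :=
  ((r : ℂ) * ∑ m ∈ Finset.Icc (-((N : ℤ) / 2)) ((N : ℤ) / 2 - 1),
    exp (-2 * Real.pi * I / N) ^ (m * k) * h m).re

theorem conj_exp_zpow (N : ℕ) (k : ℤ) :
    (starRingEnd ℂ) (exp (-2 * Real.pi * I / N) ^ k) = exp (-2 * Real.pi * I / N) ^ (-k) := by
  rw [map_zpow₀, ← exp_conj, _root_.zpow_neg, ← _root_.inv_zpow, ← exp_neg]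
  congr 2
  simp [map_div₀, conj_I, map_ofNat]
  ring

theorem fourierKernel_neg (N : ℕ) (r : ℝ) {h : ℤ → ℂ} {s : ℝ}
    (hh : ∀ m, (starRingEnd ℂ) (h m) = s * h m) (k : ℤ) :
    fourierKernel N r h (-k) = s * fourierKernel N r h k := by
  have hconj : (starRingEnd ℂ) ((r : ℂ) * ∑ m ∈ Finset.Icc (-((N : ℤ) / 2)) ((N : ℤ) / 2 - 1),
      exp (-2 * Real.pi * I / N) ^ (m * -k) * h m)
        = (s : ℂ) * ((r : ℂ) * ∑ m ∈ Finset.Icc (-((N : ℤ) / 2)) ((N : ℤ) / 2 - 1),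
      exp (-2 * Real.pi * I / N) ^ (m * k) * h m) := by
    simp only [map_mul, map_sum, conj_ofReal, conj_exp_zpow, hh, Finset.mul_sum]
    refine Finset.sum_congr rfl fun m _ => ?_
    rw [mul_neg, neg_neg]
    ring
  unfold fourierKernel
  rw [← conj_re, hconj, re_ofReal_mul]

theorem DNmat_eq_of (N : ℕ) (L : ℝ) :
    DNmat N L = of fun l j : Fin N =>
      fourierKernel N (Real.pi / (N * L)) (fun m => I * m) ((j : ℤ) - l) :=
  rfl

theorem Lmat_eq_of (N : ℕ) (L γ a μ μ₂ : ℝ) :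
    Lmat N L γ a μ μ₂ = of fun l j : Fin N =>
      fourierKernel N (1 / N) (fun m => (lSym γ a μ μ₂ (Real.pi * m / L) : ℂ)) ((j : ℤ) - l) :=
  rfl

theorem DNmat_transpose (N : ℕ) (L : ℝ) : (DNmat N L)ᵀ = -DNmat N L := by
  rw [DNmat_eq_of, toeplitz_transpose _ (fourierKernel_neg N _ (s := -1) fun m => by simp),
    neg_one_smul]

theorem DNmat_submatrix_rev (N : ℕ) (L : ℝ) :
    (DNmat N L).submatrix Fin.rev Fin.rev = -DNmat N L := by
  rw [DNmat_eq_of, toeplitz_submatrix_rev _ (fourierKernel_neg N _ (s := -1) fun m => by simp),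
    neg_one_smul]

theorem Lmat_submatrix_rev (N : ℕ) (L γ a μ μ₂ : ℝ) :
    (Lmat N L γ a μ μ₂).submatrix Fin.rev Fin.rev = Lmat N L γ a μ μ₂ := by
  rw [Lmat_eq_of, toeplitz_submatrix_rev _ (fourierKernel_neg N _ (s := 1) fun m => by simp),
    one_smul]

theorem flipMat_mulVec {N : ℕ} (x : Fin N → ℝ) : flipMat N *ᵥ x = x ∘ Fin.rev := by
  ext l
  have hrev : ∀ j : Fin N, (l : ℕ) + j = N - 1 ↔ j = l.rev := fun j => by
    rw [Fin.ext_iff, Fin.val_rev]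
    omega
  simp [mulVec, dotProduct, flipMat, hrev]

end FourierCollocation

section Momentum

variable {ι : Type*} [Fintype ι] [DecidableEq ι] (e : Equiv.Perm ι) {D Lm : Matrix ι ι ℝ}

theorem dotProduct_momentum_rate_eq_zero (hDT : Dᵀ = -D) (hD : D.submatrix e e = -D)
    (hL : Lm.submatrix e e = Lm) {α β p q r : ℝ} {z u z' u' : ι → ℝ}
    (hz : z ∘ e = z) (hu : u ∘ e = u)
    (h₁ : (1 - α • D ^ 2) *ᵥ z' + Lm *ᵥ (D *ᵥ u) - p • D *ᵥ (z * u) = 0)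
    (h₂ : (1 - α • D ^ 2) *ᵥ u' + q • (1 + β • D ^ 2) *ᵥ (D *ᵥ z)
      - r • D *ᵥ (u * u) = 0) :
    z' ⬝ᵥ (1 - α • D ^ 2) *ᵥ u + z ⬝ᵥ (1 - α • D ^ 2) *ᵥ u' = 0 := by
  have hD' : D.submatrix e e = (-1 : ℝ) • D := by rw [hD, neg_one_smul]
  have hJc : (1 + β • D ^ 2).submatrix e e = (1 : ℝ) • (1 + β • D ^ 2) := by
    simp only [submatrix_add, Pi.add_apply, submatrix_one_equiv, submatrix_smul, Pi.smul_apply,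
      sq, one_smul]
    rw [← submatrix_mul_equiv D D e e e, hD, neg_mul_neg]
  have odd_of_even : ∀ x : ι → ℝ, x ∘ e = x → (D *ᵥ x) ∘ e = -(D *ᵥ x) := fun x hx => by
    simpa only [mul_one, neg_one_smul] using
      mulVec_comp_perm e hD' (t := 1) (by rw [hx, one_smul])
  have hzu := odd_of_even _ (show (z * u) ∘ e = z * u by rw [Pi.mul_comp, hz, hu])
  have huu := odd_of_even _ (show (u * u) ∘ e = u * u by rw [Pi.mul_comp, hu])
  have hLDu : (Lm *ᵥ (D *ᵥ u)) ∘ e = -(Lm *ᵥ (D *ᵥ u)) := by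
    simpa only [one_mul, neg_one_smul] using
      mulVec_comp_perm e (A := Lm) (s := 1) (by rw [hL, one_smul]) (x := D *ᵥ u) (t := -1)
        (by rw [odd_of_even u hu, neg_one_smul])
  have hJcDz : ((1 + β • D ^ 2) *ᵥ (D *ᵥ z)) ∘ e = -((1 + β • D ^ 2) *ᵥ (D *ᵥ z)) := by
    simpa only [one_mul, neg_one_smul] using
      mulVec_comp_perm e hJc (t := -1) (by rw [odd_of_even z hz, neg_one_smul])
  have hJ : (1 - α • D ^ 2)ᵀ = 1 - α • D ^ 2 := by
    rw [transpose_sub, transpose_one, transpose_smul, transpose_pow, hDT, neg_sq]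
  have hJz' : (1 - α • D ^ 2) *ᵥ z' = p • D *ᵥ (z * u) - Lm *ᵥ (D *ᵥ u) :=
    eq_sub_of_add_eq (sub_eq_zero.mp h₁)
  have hJu' : (1 - α • D ^ 2) *ᵥ u' = r • D *ᵥ (u * u) - q • (1 + β • D ^ 2) *ᵥ (D *ᵥ z) :=
    eq_sub_of_add_eq (sub_eq_zero.mp h₂)
  rw [dotProduct_mulVec, ← mulVec_transpose, hJ, dotProduct_comm, hJz', hJu']
  rw [dotProduct_sub, dotProduct_sub, dotProduct_smul, dotProduct_smul, dotProduct_smul,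
    dotProduct_eq_zero_of_comp_perm e hu hzu, dotProduct_eq_zero_of_comp_perm e hu hLDu,
    dotProduct_eq_zero_of_comp_perm e hz huu, dotProduct_eq_zero_of_comp_perm e hz hJcDz]
  simp

end Momentum

section Calculus

variable {𝕜 ι : Type*} [NontriviallyNormedField 𝕜] [Fintype ι] {x y : 𝕜 → ι → 𝕜}
  {x' y' : ι → 𝕜} {S : Set 𝕜} {t : 𝕜}

theorem HasDerivWithinAt.dotProduct (hx : HasDerivWithinAt x x' S t)
    (hy : HasDerivWithinAt y y' S t) :
    HasDerivWithinAt (fun s => x s ⬝ᵥ y s) (x' ⬝ᵥ y t + x t ⬝ᵥ y') S t := by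
  have h := HasDerivWithinAt.fun_sum (u := Finset.univ) fun i _ =>
    (hasDerivWithinAt_pi.mp hx i).mul (hasDerivWithinAt_pi.mp hy i)
  rwa [Finset.sum_add_distrib] at h

theorem HasDerivWithinAt.mulVec {κ : Type*} (A : Matrix κ ι 𝕜)
    (hy : HasDerivWithinAt y y' S t) :
    HasDerivWithinAt (fun s => A *ᵥ y s) (A *ᵥ y') S t :=
  hasDerivWithinAt_pi.mpr fun k => HasDerivWithinAt.fun_sum fun i _ =>
    (hasDerivWithinAt_pi.mp hy i).const_mul (A k i)

end Calculus

theorem discrete_momentum_conservation_general (N : ℕ)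
    (L : ℝ) (γ ε μ μ₂ b c a : ℝ)
    (Z U Z' U' : ℝ → Fin N → ℝ)
    (hZdiff : ∀ t ≥ (0 : ℝ), ∀ i : Fin N,
      HasDerivWithinAt (fun s => Z s i) (Z' t i) (Set.Ici 0) t)
    (hUdiff : ∀ t ≥ (0 : ℝ), ∀ i : Fin N,
      HasDerivWithinAt (fun s => U s i) (U' t i) (Set.Ici 0) t)
    (heq1 : ∀ t ≥ (0 : ℝ),
      (1 - (μ * b) • (DNmat N L) ^ 2).mulVec (Z' t)
        + (Lmat N L γ a μ μ₂).mulVec ((DNmat N L).mulVec (U t))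
        - (ε / γ) • (DNmat N L).mulVec (fun i => Z t i * U t i) = 0)
    (heq2 : ∀ t ≥ (0 : ℝ),
      (1 - (μ * b) • (DNmat N L) ^ 2).mulVec (U' t)
        + (1 - γ) • (1 + (μ * c) • (DNmat N L) ^ 2).mulVec ((DNmat N L).mulVec (Z t))
        - (ε / (2 * γ)) • (DNmat N L).mulVec (fun i => U t i * U t i) = 0)
    (hsymZ : ∀ t ≥ (0 : ℝ), (flipMat N).mulVec (Z t) = Z t)
    (hsymU : ∀ t ≥ (0 : ℝ), (flipMat N).mulVec (U t) = U t) :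
    ∀ t ≥ (0 : ℝ),
      dotProduct (Z t) ((1 - (μ * b) • (DNmat N L) ^ 2).mulVec (U t))
        = dotProduct (Z 0) ((1 - (μ * b) • (DNmat N L) ^ 2).mulVec (U 0)) := by
  set J := 1 - (μ * b) • DNmat N L ^ 2
  have hrate : ∀ s ≥ (0 : ℝ), HasDerivWithinAt (fun s => Z s ⬝ᵥ J *ᵥ U s) 0 (Set.Ici 0) s := by
    intro s hs
    have h := (hasDerivWithinAt_pi.mpr (hZdiff s hs)).dotProduct
      ((hasDerivWithinAt_pi.mpr (hUdiff s hs)).mulVec J)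
    rwa [dotProduct_momentum_rate_eq_zero Fin.revPerm (DNmat_transpose N L)
      (DNmat_submatrix_rev N L) (Lmat_submatrix_rev N L γ a μ μ₂)
      ((flipMat_mulVec _).symm.trans (hsymZ s hs)) ((flipMat_mulVec _).symm.trans (hsymU s hs))
      (heq1 s hs) (heq2 s hs)] at h
  intro t ht
  exact constant_of_has_deriv_right_zero
    (fun s hs => (hrate s hs.1).continuousWithinAt.mono Set.Icc_subset_Ici_self)
    (fun s hs => (hrate s hs.1).mono (Set.Ici_subset_Ici.mpr hs.1)) t ⟨ht, le_rfl⟩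

/-- For symmetric solutions of the Fourier collocation semidiscretization of the scaled
Boussinesq/Full dispersion system in the Hamiltonian case `d = b`, the discrete momentum
`I_h(Z, U) = ⟨Z, J_{b,h} U⟩` is conserved in time. -/
theorem discrete_momentum_conservation (N : ℕ) (hN : 0 < N) (hNe : Even N)
    (L : ℝ) (hL : 0 < L) (γ ε μ μ₂ b c a : ℝ) (hγ : γ ∈ Set.Ioo (0 : ℝ) 1)
    (hε : 0 < ε) (hμ : 0 < μ) (hμ₂ : 0 < μ₂) (hb : 0 < b) (hc : c ≤ 0) (ha : a ≤ 0)
    (Z U Z' U' : ℝ → Fin N → ℝ)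
    (hZdiff : ∀ t ≥ (0 : ℝ), ∀ i : Fin N,
      HasDerivWithinAt (fun s => Z s i) (Z' t i) (Set.Ici 0) t)
    (hUdiff : ∀ t ≥ (0 : ℝ), ∀ i : Fin N,
      HasDerivWithinAt (fun s => U s i) (U' t i) (Set.Ici 0) t)
    (heq1 : ∀ t ≥ (0 : ℝ),
      (1 - (μ * b) • (DNmat N L) ^ 2).mulVec (Z' t)
        + (Lmat N L γ a μ μ₂).mulVec ((DNmat N L).mulVec (U t))
        - (ε / γ) • (DNmat N L).mulVec (fun i => Z t i * U t i) = 0)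
    (heq2 : ∀ t ≥ (0 : ℝ),
      (1 - (μ * b) • (DNmat N L) ^ 2).mulVec (U' t)
        + (1 - γ) • (1 + (μ * c) • (DNmat N L) ^ 2).mulVec ((DNmat N L).mulVec (Z t))
        - (ε / (2 * γ)) • (DNmat N L).mulVec (fun i => U t i * U t i) = 0)
    (hsymZ : ∀ t ≥ (0 : ℝ), (flipMat N).mulVec (Z t) = Z t)
    (hsymU : ∀ t ≥ (0 : ℝ), (flipMat N).mulVec (U t) = U t) :
    ∀ t ≥ (0 : ℝ),
      dotProduct (Z t) ((1 - (μ * b) • (DNmat N L) ^ 2).mulVec (U t))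
        = dotProduct (Z 0) ((1 - (μ * b) • (DNmat N L) ^ 2).mulVec (U 0)) :=
  discrete_momentum_conservation_general N L γ ε μ μ₂ b c a Z U Z' U' hZdiff hUdiff heq1 heq2 hsymZ
    hsymU
end
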